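/- Let α > 0, let η be a Borel probability measure on ℝⁿ × ℝᵐ, and let f : ℝⁿ × ℝᵐ → ℝ be Borel measurable such that for every y ∈ ℝᵐ the map x ↦ (1/2)‖x‖² − f(x, y) is α-strongly convex on ℝⁿ. Let T, T* : ℝⁿ × ℝᵐ → ℝⁿ be Borel measurable maps such that for η-almost every (x, y), T*(x, y) is a global minimizer of z ↦ (1/2)‖z − x‖² − f(z, y), and assume (x, y) ↦ (1/2)‖T(x, y) − x‖² − f(T(x, y), y) and (x, y) ↦ (1/2)‖T*(x, y) − x‖² − f(T*(x, y), y) are η-integrable and (x, y) ↦ ‖T(x, y) − T*(x, y)‖² is η-integrable. Denote by δ := ∫ [ (1/2)‖T − x‖² − f(T, y) ] dη − ∫ [ (1/2)‖T* − x‖² − f(T*, y) ] dη ≥ 0 the minimization gap. Then the dual bounded-Lipschitz distance between the pushforwards of η under (x, y) ↦ T(x, y) and under (x, y) ↦ T*(x, y) satisfies d( T_#η, T*_#η ) ≤ √( (2/α)·δ ). -/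

import Mathlib

open MeasureTheory

/-!
For fixed `(x, y)` the cost `z ↦ ½‖z - x‖² - f (z, y)` differs from `½‖z‖² - f (z, y)` by an affine
function of `z`, so it is `α`-strongly convex, and strong convexity at its minimiser `T* (x, y)`
gives `α/2 ‖T - T*‖² ≤ cost (T) - cost (T*)`. Integrating, `‖T - T*‖²` has `η`-integral at most
`2δ/α`. Every bounded `1`-Lipschitz `g` satisfies `|∫ g ∘ T dη - ∫ g ∘ T* dη| ≤ ∫ ‖T - T*‖ dη`,
and by Cauchy–Schwarz the latter is at most the square root of `∫ ‖T - T*‖² dη`.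
-/

/-- The dual bounded-Lipschitz distance between Borel probability measures on ℝⁿ:
`d(μ, ν) = sup { |∫ g dμ − ∫ g dν| : |g| ≤ 1 and g is 1-Lipschitz }`. -/
noncomputable def dBL {n : ℕ} (μ ν : Measure (EuclideanSpace ℝ (Fin n))) : ℝ :=
  sSup { r : ℝ | ∃ g : EuclideanSpace ℝ (Fin n) → ℝ,
    (∀ x, |g x| ≤ 1) ∧ (∀ x x', |g x - g x'| ≤ ‖x - x'‖) ∧
    r = |(∫ x, g x ∂μ) - ∫ x, g x ∂ν| }

open Filter Topology in
theorem StrongConvexOn.mul_sq_norm_sub_le_of_isMinOn {E : Type*} [NormedAddCommGroup E]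
    [NormedSpace ℝ E] {s : Set E} {m : ℝ} {f : E → ℝ} {x₀ x : E} (hf : StrongConvexOn s m f)
    (hmin : IsMinOn f s x₀) (hx₀ : x₀ ∈ s) (hx : x ∈ s) :
    m / 2 * ‖x - x₀‖ ^ 2 ≤ f x - f x₀ := by
  -- compare `f x₀` with `f` at `t • x + (1 - t) • x₀`, then let `t → 0`
  have hstep : ∀ t ∈ Set.Ioo (0 : ℝ) 1, (1 - t) * (m / 2 * ‖x - x₀‖ ^ 2) ≤ f x - f x₀ := by
    rintro t ⟨ht0, ht1⟩
    have hconv := hf.2 hx hx₀ ht0.le (sub_nonneg.2 ht1.le) (add_sub_cancel t 1)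
    have hle : f x₀ ≤ f (t • x + (1 - t) • x₀) :=
      hmin (hf.1 hx hx₀ ht0.le (sub_nonneg.2 ht1.le) (add_sub_cancel t 1))
    simp only [smul_eq_mul] at hconv
    have : t * ((1 - t) * (m / 2 * ‖x - x₀‖ ^ 2)) ≤ t * (f x - f x₀) := by linarith
    exact le_of_mul_le_mul_left this ht0
  have hlim : Tendsto (fun t : ℝ => (1 - t) * (m / 2 * ‖x - x₀‖ ^ 2)) (𝓝[>] 0)
      (𝓝 (m / 2 * ‖x - x₀‖ ^ 2)) :=
    tendsto_nhdsWithin_of_tendsto_nhds <|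
      ((continuous_const.sub continuous_id).mul continuous_const).tendsto' 0 _ (by simp)
  exact le_of_tendsto hlim (eventually_of_mem (Ioo_mem_nhdsGT one_pos) hstep)

theorem strongConvexOn_half_sq_norm_sub_sub {E : Type*} [NormedAddCommGroup E]
    [InnerProductSpace ℝ E] {α : ℝ} {g : E → ℝ}
    (hg : ConvexOn ℝ Set.univ fun z => 1 / 2 * ‖z‖ ^ 2 - g z - α / 2 * ‖z‖ ^ 2) (x : E) :
    StrongConvexOn Set.univ α fun z => 1 / 2 * ‖z - x‖ ^ 2 - g z := by
  have haffine : ConvexOn ℝ Set.univ fun z => 1 / 2 * ‖x‖ ^ 2 - inner ℝ x z := by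
    refine (((-(innerₛₗ ℝ x)).convexOn convex_univ).add_const (1 / 2 * ‖x‖ ^ 2)).congr ?_
    intro z _
    simp only [LinearMap.coe_neg, coe_innerₛₗ_apply, Pi.add_apply, Pi.neg_apply]
    ring
  rw [strongConvexOn_iff_convex]
  refine (hg.add haffine).congr fun z _ => ?_
  simp only [Pi.add_apply]
  rw [norm_sub_sq_real, real_inner_comm]
  ring

theorem sq_integral_le_integral_sq {Ω : Type*} [MeasurableSpace Ω] {μ : Measure Ω}
    [IsProbabilityMeasure μ] {X : Ω → ℝ} (hX : MemLp X 2 μ) :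
    (∫ ω, X ω ∂μ) ^ 2 ≤ ∫ ω, X ω ^ 2 ∂μ := by
  have hvar := ProbabilityTheory.variance_nonneg X μ
  rw [ProbabilityTheory.variance_eq_sub hX] at hvar
  simpa only [Pi.pow_apply, sub_nonneg] using hvar

theorem abs_integral_map_sub_integral_map_le {Ω E : Type*} [MeasurableSpace Ω]
    [NormedAddCommGroup E] [MeasurableSpace E] [OpensMeasurableSpace E] {η : Measure Ω}
    [IsFiniteMeasure η] {T S : Ω → E} (hT : Measurable T) (hS : Measurable S)
    (hTS : Integrable (fun p => ‖T p - S p‖) η) {g : E → ℝ} (hg_bdd : ∀ x, |g x| ≤ 1)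
    (hg_lip : ∀ x x', |g x - g x'| ≤ ‖x - x'‖) :
    |(∫ x, g x ∂η.map T) - ∫ x, g x ∂η.map S| ≤ ∫ p, ‖T p - S p‖ ∂η := by
  have hg : LipschitzWith 1 g := LipschitzWith.of_dist_le_mul fun x x' => by
    simpa [Real.dist_eq, dist_eq_norm] using hg_lip x x'
  have hg_int : ∀ U : Ω → E, Measurable U → Integrable (fun p => g (U p)) η := fun U hU =>
    .of_bound (hg.continuous.measurable.comp hU).aestronglyMeasurable 1
      (.of_forall fun p => hg_bdd (U p))
  rw [integral_map hT.aemeasurable hg.continuous.aestronglyMeasurable,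
    integral_map hS.aemeasurable hg.continuous.aestronglyMeasurable,
    ← integral_sub (hg_int T hT) (hg_int S hS)]
  calc |∫ p, (g (T p) - g (S p)) ∂η| ≤ ∫ p, |g (T p) - g (S p)| ∂η :=
        abs_integral_le_integral_abs
    _ ≤ ∫ p, ‖T p - S p‖ ∂η :=
        integral_mono ((hg_int T hT).sub (hg_int S hS)).abs hTS fun p => hg_lip (T p) (S p)

theorem dBL_map_le_integral_norm_sub {Ω : Type*} [MeasurableSpace Ω] {n : ℕ} {η : Measure Ω}
    [IsFiniteMeasure η] {T S : Ω → EuclideanSpace ℝ (Fin n)} (hT : Measurable T)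
    (hS : Measurable S) (hTS : Integrable (fun p => ‖T p - S p‖) η) :
    dBL (η.map T) (η.map S) ≤ ∫ p, ‖T p - S p‖ ∂η := by
  refine Real.sSup_le ?_ (integral_nonneg fun p => norm_nonneg _)
  rintro r ⟨g, hg_bdd, hg_lip, rfl⟩
  exact abs_integral_map_sub_integral_map_le hT hS hTS hg_bdd hg_lip

theorem stmt_9_general {n m : ℕ} (α : ℝ) (hα : 0 < α)
    (η : Measure (EuclideanSpace ℝ (Fin n) × EuclideanSpace ℝ (Fin m)))
    (hη : IsProbabilityMeasure η)
    (f : EuclideanSpace ℝ (Fin n) × EuclideanSpace ℝ (Fin m) → ℝ)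
    (hconv : ∀ y : EuclideanSpace ℝ (Fin m),
      ConvexOn ℝ Set.univ
        (fun x : EuclideanSpace ℝ (Fin n) =>
          (1 / 2) * ‖x‖ ^ 2 - f (x, y) - (α / 2) * ‖x‖ ^ 2))
    (T Tstar : EuclideanSpace ℝ (Fin n) × EuclideanSpace ℝ (Fin m) →
      EuclideanSpace ℝ (Fin n))
    (hT : Measurable T) (hTstar : Measurable Tstar)
    (hmin : ∀ᵐ p ∂η, ∀ z : EuclideanSpace ℝ (Fin n),
      (1 / 2) * ‖Tstar p - p.1‖ ^ 2 - f (Tstar p, p.2) ≤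
        (1 / 2) * ‖z - p.1‖ ^ 2 - f (z, p.2))
    (hintT : Integrable (fun p => (1 / 2) * ‖T p - p.1‖ ^ 2 - f (T p, p.2)) η)
    (hintTstar : Integrable
      (fun p => (1 / 2) * ‖Tstar p - p.1‖ ^ 2 - f (Tstar p, p.2)) η)
    (hintdiff : Integrable (fun p => ‖T p - Tstar p‖ ^ 2) η)
    (δ : ℝ)
    (hδ : δ = (∫ p, ((1 / 2) * ‖T p - p.1‖ ^ 2 - f (T p, p.2)) ∂η) -
      ∫ p, ((1 / 2) * ‖Tstar p - p.1‖ ^ 2 - f (Tstar p, p.2)) ∂η) :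
    dBL (η.map T) (η.map Tstar) ≤ Real.sqrt ((2 / α) * δ) := by
  have hgap : ∀ᵐ p ∂η, α / 2 * ‖T p - Tstar p‖ ^ 2 ≤
      ((1 / 2) * ‖T p - p.1‖ ^ 2 - f (T p, p.2)) -
        ((1 / 2) * ‖Tstar p - p.1‖ ^ 2 - f (Tstar p, p.2)) := by
    filter_upwards [hmin] with p hp
    exact (strongConvexOn_half_sq_norm_sub_sub (hconv p.2) p.1).mul_sq_norm_sub_le_of_isMinOn
      (isMinOn_iff.2 fun z _ => hp z) trivial trivial
  have hL2 : ∫ p, ‖T p - Tstar p‖ ^ 2 ∂η ≤ 2 / α * δ := by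
    have h : α / 2 * ∫ p, ‖T p - Tstar p‖ ^ 2 ∂η ≤ δ := by
      rw [hδ, ← integral_sub hintT hintTstar, ← integral_const_mul]
      exact integral_mono_ae (hintdiff.const_mul _) (hintT.sub hintTstar) hgap
    rw [div_mul_eq_mul_div, le_div_iff₀ hα]
    linarith
  have hmemLp : MemLp (fun p => ‖T p - Tstar p‖) 2 η :=
    (memLp_two_iff_integrable_sq (hT.sub hTstar).norm.aestronglyMeasurable).2 hintdiff
  calc dBL (η.map T) (η.map Tstar) ≤ ∫ p, ‖T p - Tstar p‖ ∂η :=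
        dBL_map_le_integral_norm_sub hT hTstar (hmemLp.integrable one_le_two)
    _ ≤ Real.sqrt (∫ p, ‖T p - Tstar p‖ ^ 2 ∂η) :=
        (le_abs_self _).trans (Real.abs_le_sqrt (sq_integral_le_integral_sq hmemLp))
    _ ≤ Real.sqrt ((2 / α) * δ) := Real.sqrt_le_sqrt hL2

theorem stmt_9 {n m : ℕ} (α : ℝ) (hα : 0 < α)
    (η : Measure (EuclideanSpace ℝ (Fin n) × EuclideanSpace ℝ (Fin m)))
    (hη : IsProbabilityMeasure η)
    (f : EuclideanSpace ℝ (Fin n) × EuclideanSpace ℝ (Fin m) → ℝ)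
    (hf : Measurable f)
    (hconv : ∀ y : EuclideanSpace ℝ (Fin m),
      ConvexOn ℝ Set.univ
        (fun x : EuclideanSpace ℝ (Fin n) =>
          (1 / 2) * ‖x‖ ^ 2 - f (x, y) - (α / 2) * ‖x‖ ^ 2))
    (T Tstar : EuclideanSpace ℝ (Fin n) × EuclideanSpace ℝ (Fin m) →
      EuclideanSpace ℝ (Fin n))
    (hT : Measurable T) (hTstar : Measurable Tstar)
    (hmin : ∀ᵐ p ∂η, ∀ z : EuclideanSpace ℝ (Fin n),
      (1 / 2) * ‖Tstar p - p.1‖ ^ 2 - f (Tstar p, p.2) ≤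
        (1 / 2) * ‖z - p.1‖ ^ 2 - f (z, p.2))
    (hintT : Integrable (fun p => (1 / 2) * ‖T p - p.1‖ ^ 2 - f (T p, p.2)) η)
    (hintTstar : Integrable
      (fun p => (1 / 2) * ‖Tstar p - p.1‖ ^ 2 - f (Tstar p, p.2)) η)
    (hintdiff : Integrable (fun p => ‖T p - Tstar p‖ ^ 2) η)
    (δ : ℝ)
    (hδ : δ = (∫ p, ((1 / 2) * ‖T p - p.1‖ ^ 2 - f (T p, p.2)) ∂η) -
      ∫ p, ((1 / 2) * ‖Tstar p - p.1‖ ^ 2 - f (Tstar p, p.2)) ∂η) :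
    dBL (η.map T) (η.map Tstar) ≤ Real.sqrt ((2 / α) * δ) :=
  stmt_9_general α hα η hη f hconv T Tstar hT hTstar hmin hintT hintTstar hintdiff δ hδ
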